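/- Let f be holomorphic on an open neighborhood of x ∈ ℂⁿ with all partial derivatives of order ≤ p vanishing at x, and let g be holomorphic on an open neighborhood of y ∈ ℂᵐ with all partial derivatives of order ≤ q vanishing at y. Then the function F(z,w) = f(z)·g(w), holomorphic near (x,y) ∈ ℂ^{n+m}, has all partial derivatives of order ≤ p + q + 1 vanishing at (x,y). -/

import Mathlib

/-!
A holomorphic function `f` on an open subset of `ℂⁿ` is `C^∞`: by the one-variable Cauchy
formula on complex lines, `z ↦ fderiv f z v` is locally a circle integral of translates of `f`,
and differentiating under the integral (with Cauchy's estimate as dominating bound) shows that it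
is again holomorphic. Granted smoothness, the Leibniz rule expands a derivative of order
`k ≤ p + q + 1` of `f(z) g(w)` into products of a derivative of order `i` of `f` and one of order
`k - i` of `g`, and `i ≤ p` or `k - i ≤ q` for each of them.
-/

open Metric Set Filter Complex MeasureTheory Topology Real
open scoped ContDiff

section Holomorphic

variable {E F : Type*} [NormedAddCommGroup E] [NormedSpace ℂ E]
  [NormedAddCommGroup F] [NormedSpace ℂ F] {f : E → F} {s : Set E}

theorem DifferentiableAt.hasDerivAt_comp_add_smul {z : E} (hf : DifferentiableAt ℂ f z)
    (v : E) : HasDerivAt (fun t : ℂ => f (z + t • v)) (fderiv ℂ f z v) 0 := by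
  have hline : HasDerivAt (fun t : ℂ => z + t • v) v 0 := by
    simpa using ((hasDerivAt_id (0 : ℂ)).smul_const v).const_add z
  exact hf.hasFDerivAt.comp_hasDerivAt_of_eq 0 hline (by simp)

theorem norm_fderiv_le_of_forall_mem_closedBall_norm_le {z : E} {r C : ℝ} (hr : 0 < r)
    (hf : DifferentiableOn ℂ f (closedBall z r)) (hC : ∀ w ∈ closedBall z r, ‖f w‖ ≤ C) :
    ‖fderiv ℂ f z‖ ≤ C / r := by
  have hC0 : 0 ≤ C := (norm_nonneg _).trans (hC z (mem_closedBall_self hr.le))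
  refine ContinuousLinearMap.opNorm_le_bound _ (by positivity) fun v => ?_
  rcases eq_or_ne v 0 with rfl | hv
  · simp
  have hv : 0 < ‖v‖ := norm_pos_iff.2 hv
  have hmaps : MapsTo (fun t : ℂ => z + t • v) (closedBall 0 (r / ‖v‖)) (closedBall z r) := by
    intro t ht
    rw [mem_closedBall, dist_zero_right, le_div_iff₀ hv] at ht
    rwa [mem_closedBall, dist_self_add_left, norm_smul]
  have hline : DifferentiableOn ℂ (fun t : ℂ => f (z + t • v)) (closedBall 0 (r / ‖v‖)) :=
    hf.comp (by fun_prop : Differentiable ℂ fun t : ℂ => z + t • v).differentiableOn hmaps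
  have hderiv := (hf.differentiableAt (closedBall_mem_nhds z hr)).hasDerivAt_comp_add_smul v
  calc ‖fderiv ℂ f z v‖ ≤ C / (r / ‖v‖) := by
        rw [← hderiv.deriv]
        exact norm_deriv_le_of_forall_mem_sphere_norm_le (by positivity)
          (hline.mono closure_ball_subset_closedBall).diffContOnCl
          fun t ht => hC _ (hmaps (sphere_subset_closedBall ht))
    _ = C / r * ‖v‖ := by field_simp

theorem fderiv_apply_eq_circleIntegral [CompleteSpace F] (hs : IsOpen s)
    (hf : DifferentiableOn ℂ f s) {z v : E} {ρ : ℝ} (hρ : 0 < ρ)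
    (hline : ∀ t ∈ closedBall (0 : ℂ) ρ, z + t • v ∈ s) :
    fderiv ℂ f z v = (2 * π * I)⁻¹ • ∮ t in C(0, ρ), (t ^ 2)⁻¹ • f (z + t • v) := by
  have hz : z ∈ s := by simpa using hline 0 (mem_closedBall_self hρ.le)
  have hcauchy : ∮ t in C(0, ρ), (t ^ 2)⁻¹ • f (z + t • v)
      = (2 * π * I) • deriv (fun t : ℂ => f (z + t • v)) 0 := by
    simpa [Function.comp_def] using
      (hf.comp (by fun_prop : Differentiable ℂ fun t : ℂ => z + t • v).differentiableOn
        hline).deriv_eq_smul_circleIntegral hρ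
  rw [hcauchy, ((hf.differentiableAt (hs.mem_nhds hz)).hasDerivAt_comp_add_smul v).deriv,
    smul_smul, inv_mul_cancel₀ two_pi_I_ne_zero, one_smul]

theorem differentiableAt_intervalIntegral_smul_comp_add [FiniteDimensional ℂ E]
    [CompleteSpace F] [SecondCountableTopology F] (hs : IsOpen s) (hf : DifferentiableOn ℂ f s)
    {M : ℝ} (hM : ∀ w ∈ s, ‖fderiv ℂ f w‖ ≤ M) {k : ℝ → ℂ} (hk : Continuous k) {γ : ℝ → E}
    (hγ : Continuous γ) {c : E} {δ : ℝ} (hδ : 0 < δ) (hγs : ∀ z ∈ ball c δ, ∀ θ, z + γ θ ∈ s)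
    (a b : ℝ) : DifferentiableAt ℂ (fun z => ∫ θ in a..b, k θ • f (z + γ θ)) c := by
  borelize E
  have hcont : ∀ z ∈ ball c δ, Continuous fun θ => k θ • f (z + γ θ) := fun z hz =>
    hk.smul (hf.continuousOn.comp_continuous (continuous_const.add hγ) (hγs z hz))
  refine (intervalIntegral.hasFDerivAt_integral_of_dominated_of_fderiv_le
    (F' := fun z θ => k θ • fderiv ℂ f (z + γ θ)) (bound := fun θ => ‖k θ‖ * M)
    (ball_mem_nhds c hδ) ?_ ?_ ?_ ?_ ?_ ?_).differentiableAt
  · filter_upwards [ball_mem_nhds c hδ] with z hz using (hcont z hz).aestronglyMeasurable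
  · exact (hcont c (mem_ball_self hδ)).intervalIntegrable a b
  · exact hk.aestronglyMeasurable.smul
      ((measurable_fderiv ℂ f).comp (measurable_const.add hγ.measurable)).aestronglyMeasurable
  · refine ae_of_all _ fun θ _ z hz => ?_
    rw [norm_smul]
    exact mul_le_mul_of_nonneg_left (hM _ (hγs z hz θ)) (norm_nonneg _)
  · exact (hk.norm.mul continuous_const).intervalIntegrable a b
  · refine ae_of_all _ fun θ _ z hz => ?_
    exact ((hf.differentiableAt (hs.mem_nhds (hγs z hz θ))).hasFDerivAt.comp z
      ((hasFDerivAt_id z).add_const (γ θ))).const_smul (k θ)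

theorem differentiableOn_fderiv_apply [FiniteDimensional ℂ E] [CompleteSpace F]
    [SecondCountableTopology F] (hs : IsOpen s) (hf : DifferentiableOn ℂ f s) (v : E) :
    DifferentiableOn ℂ (fun z => fderiv ℂ f z v) s := by
  intro c hc
  obtain ⟨R, hR, hRs⟩ := nhds_basis_closedBall.mem_iff.1 (hs.mem_nhds hc)
  obtain ⟨C, hC⟩ := (isCompact_closedBall c R).exists_bound_of_continuousOn
    (hf.continuousOn.mono hRs)
  set ρ := R / 4 / (‖v‖ + 1)
  have hρ : 0 < ρ := by positivity
  have hline : ∀ z ∈ ball c (R / 4), ∀ t ∈ closedBall (0 : ℂ) ρ, z + t • v ∈ ball c (R / 2) := by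
    intro z hz t ht
    rw [mem_closedBall, dist_zero_right] at ht
    have htv : ‖t • v‖ ≤ R / 4 := calc
      ‖t • v‖ ≤ ρ * (‖v‖ + 1) := by
        rw [norm_smul]
        exact mul_le_mul ht (by linarith) (norm_nonneg v) hρ.le
      _ = R / 4 := div_mul_cancel₀ _ (by positivity)
    rw [mem_ball] at hz ⊢
    calc dist (z + t • v) c ≤ dist (z + t • v) z + dist z c := dist_triangle _ _ _
      _ < R / 2 := by rw [dist_self_add_left]; linarith
  have hball : ball c (R / 2) ⊆ s :=
    ball_subset_closedBall.trans ((closedBall_subset_closedBall (by linarith)).trans hRs)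
  have hM : ∀ w ∈ ball c (R / 2), ‖fderiv ℂ f w‖ ≤ C / (R / 2) := fun w hw => by
    have hsub : closedBall w (R / 2) ⊆ closedBall c R :=
      closedBall_subset_closedBall' (by linarith [mem_ball.1 hw])
    exact norm_fderiv_le_of_forall_mem_closedBall_norm_le (by positivity)
      (hf.mono (hsub.trans hRs)) fun u hu => hC u (hsub hu)
  have hrep : (fun z => fderiv ℂ f z v) =ᶠ[𝓝 c]
      fun z => (2 * π * I)⁻¹ • ∮ t in C(0, ρ), (t ^ 2)⁻¹ • f (z + t • v) := by
    filter_upwards [ball_mem_nhds c (by positivity : 0 < R / 4)] with z hz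
    exact fderiv_apply_eq_circleIntegral hs hf hρ fun t ht => hball (hline z hz t ht)
  have hk : Continuous fun θ => deriv (circleMap 0 ρ) θ * (circleMap 0 ρ θ ^ 2)⁻¹ := by
    simp only [deriv_circleMap]
    exact ((continuous_circleMap 0 ρ).mul continuous_const).mul
      (((continuous_circleMap 0 ρ).pow 2).inv₀ fun θ => pow_ne_zero 2 (circleMap_ne_center hρ.ne'))
  have hint : DifferentiableAt ℂ
      (fun z => ∮ t in C(0, ρ), (t ^ 2)⁻¹ • f (z + t • v)) c := by
    simp only [circleIntegral, smul_smul]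
    exact differentiableAt_intervalIntegral_smul_comp_add isOpen_ball (hf.mono hball) hM hk
      ((continuous_circleMap 0 ρ).smul continuous_const) (by positivity)
      (fun z hz θ => hline z hz _ (sphere_subset_closedBall (circleMap_mem_sphere 0 hρ.le θ)))
      0 (2 * π)
  exact ((hint.const_smul _).congr_of_eventuallyEq hrep).differentiableWithinAt

theorem DifferentiableOn.contDiffOn_of_isOpen [FiniteDimensional ℂ E] [CompleteSpace F]
    [SecondCountableTopology F] (hs : IsOpen s) (hf : DifferentiableOn ℂ f s) :
    ContDiffOn ℂ ∞ f s := by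
  refine contDiffOn_infty.2 fun k => ?_
  induction k generalizing f with
  | zero => exact contDiffOn_zero.2 hf.continuousOn
  | succ k ih =>
    rw [Nat.cast_succ, contDiffOn_succ_iff_fderiv_apply hs.uniqueDiffOn]
    refine ⟨hf, fun h => absurd h (by simp), fun v => ?_⟩
    exact (ih (differentiableOn_fderiv_apply hs hf v)).congr fun z hz => by
      rw [fderivWithin_of_isOpen hs hz]

end Holomorphic

section Vanishing

variable {𝕜 E F G A : Type*} [NontriviallyNormedField 𝕜] [NormedAddCommGroup E]
  [NormedSpace 𝕜 E] [NormedAddCommGroup F] [NormedSpace 𝕜 F] [NormedAddCommGroup G]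
  [NormedSpace 𝕜 G] [NormedRing A] [NormedAlgebra 𝕜 A] {s : Set E}

theorem ContinuousLinearMap.iteratedFDeriv_comp_right_eq_zero (L : G →L[𝕜] E) {f : E → F}
    (hs : IsOpen s) {i : ℕ} (hf : ContDiffOn 𝕜 i f s) {y : G} (hy : L y ∈ s)
    (h : iteratedFDeriv 𝕜 i f (L y) = 0) : iteratedFDeriv 𝕜 i (f ∘ L) y = 0 := by
  have hs' : IsOpen (L ⁻¹' s) := hs.preimage L.continuous
  rw [← iteratedFDerivWithin_of_isOpen i hs' hy,
    L.iteratedFDerivWithin_comp_right hf hs.uniqueDiffOn hs'.uniqueDiffOn hy le_rfl,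
    iteratedFDerivWithin_of_isOpen i hs hy, h]
  ext
  simp

theorem iteratedFDeriv_mul_eq_zero {f g : E → A} (hs : IsOpen s) {x : E} (hx : x ∈ s)
    {p q k : ℕ} (hf : ContDiffOn 𝕜 k f s) (hg : ContDiffOn 𝕜 k g s)
    (hfp : ∀ i ≤ p, iteratedFDeriv 𝕜 i f x = 0) (hgq : ∀ j ≤ q, iteratedFDeriv 𝕜 j g x = 0)
    (hk : k ≤ p + q + 1) : iteratedFDeriv 𝕜 k (fun z => f z * g z) x = 0 := by
  rw [← iteratedFDerivWithin_of_isOpen k hs hx, ← norm_le_zero_iff]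
  refine (norm_iteratedFDerivWithin_mul_le hf hg hs.uniqueDiffOn hx le_rfl).trans_eq
    (Finset.sum_eq_zero fun i _ => ?_)
  rcases le_or_gt i p with hi | hi
  · rw [iteratedFDerivWithin_of_isOpen i hs hx, hfp i hi]
    simp
  · rw [iteratedFDerivWithin_of_isOpen (k - i) hs hx, hgq (k - i) (by omega)]
    simp

end Vanishing

/-- Lemma 4.6: if all derivatives of order ≤ p of a holomorphic `f` vanish at `x ∈ ℂⁿ`
and all derivatives of order ≤ q of a holomorphic `g` vanish at `y ∈ ℂᵐ`, then all
derivatives of order ≤ p+q+1 of `(z,w) ↦ f(z)·g(w)` vanish at `(x,y)`. -/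
theorem stmt13 (n m p q : ℕ) (f : (Fin n → ℂ) → ℂ) (g : (Fin m → ℂ) → ℂ)
    (x : Fin n → ℂ) (y : Fin m → ℂ)
    (U : Set (Fin n → ℂ)) (V : Set (Fin m → ℂ))
    (hU : IsOpen U) (hx : x ∈ U) (hf : DifferentiableOn ℂ f U)
    (hV : IsOpen V) (hy : y ∈ V) (hg : DifferentiableOn ℂ g V)
    (hfp : ∀ k ≤ p, iteratedFDeriv ℂ k f x = 0)
    (hgq : ∀ k ≤ q, iteratedFDeriv ℂ k g y = 0) :
    ∀ k ≤ p + q + 1,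
      iteratedFDeriv ℂ k
        (fun zw : (Fin n → ℂ) × (Fin m → ℂ) => f zw.1 * g zw.2) (x, y) = 0 := by
  intro k hk
  have hfC : ∀ i : ℕ, ContDiffOn ℂ i f U := fun i =>
    (hf.contDiffOn_of_isOpen hU).of_le (by exact_mod_cast le_top)
  have hgC : ∀ i : ℕ, ContDiffOn ℂ i g V := fun i =>
    (hg.contDiffOn_of_isOpen hV).of_le (by exact_mod_cast le_top)
  refine iteratedFDeriv_mul_eq_zero (hU.prod hV) ⟨hx, hy⟩
    ((hfC k).comp contDiffOn_fst fun _ h => h.1) ((hgC k).comp contDiffOn_snd fun _ h => h.2)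
    (fun i hi => ?_) (fun j hj => ?_) hk
  · exact (ContinuousLinearMap.fst ℂ _ _).iteratedFDeriv_comp_right_eq_zero hU (hfC i)
      (y := (x, y)) hx (hfp i hi)
  · exact (ContinuousLinearMap.snd ℂ _ _).iteratedFDeriv_comp_right_eq_zero hV (hgC j)
      (y := (x, y)) hy (hgq j hj)
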